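/- arXiv:1204.5205 — 2 statements merged into one kernel-verified Lean document; each statement's English description precedes it below -/
import Mathlib

section
/- Let R be a ring. If the polynomial ring R[x] is reversible, then R is right McCoy. (This is the σ = id instance of the corollary: if R[x;σ] is reversible then R is σ-skew McCoy.) -/
/-- A ring is reversible if `a * b = 0` implies `b * a = 0`. -/
def IsReversibleRing (S : Type*) [Ring S] : Prop :=
  ∀ a b : S, a * b = 0 → b * a = 0

/-- A ring is right McCoy if whenever nonzero polynomials `f, g` over it satisfy
`f * g = 0`, there is a nonzero constant `c` with `f * C c = 0`. -/
def IsRightMcCoyRing (S : Type*) [Ring S] : Prop :=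
  ∀ f g : Polynomial S, f ≠ 0 → g ≠ 0 → f * g = 0 →
    ∃ c : S, c ≠ 0 ∧ f * Polynomial.C c = 0

/-!
Take a nonzero right annihilator `q` of `f` of least degree `m`. If every coefficient `aᵢ` of
`f` kills `q`, the leading coefficient of `q` is the constant we want. Otherwise let `k` be the
largest index with `aₖ q ≠ 0`; comparing the coefficients of `X^(k+m)` in `f q = 0` gives
`aₖ · lead q = 0`, so `aₖ q` has smaller degree than `q`. Since `R[x]` is reversible it is
semicommutative, so `f q = 0` forces `f aₖ q = 0`, contradicting the minimality of `m`.
-/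

open Polynomial

def IsSemicommutativeRing (S : Type*) [Ring S] : Prop :=
  ∀ a b : S, a * b = 0 → ∀ r : S, a * r * b = 0

theorem IsReversibleRing.isSemicommutativeRing {S : Type*} [Ring S] (h : IsReversibleRing S) :
    IsSemicommutativeRing S := fun a b hab r =>
  h b (a * r) (by rw [← mul_assoc, h a b hab, zero_mul])

namespace Polynomial

variable {R : Type*} [Ring R]

theorem C_mul_eq_zero_iff {a : R} {p : R[X]} : C a * p = 0 ↔ ∀ n, a * p.coeff n = 0 := by
  simp only [Polynomial.ext_iff, coeff_C_mul, coeff_zero]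

theorem natDegree_C_mul_lt_of_mul_leadingCoeff_eq_zero {a : R} {p : R[X]} (hp : C a * p ≠ 0)
    (h : a * p.leadingCoeff = 0) : (C a * p).natDegree < p.natDegree :=
  (natDegree_C_mul_le a p).lt_of_ne fun heq =>
    hp (leadingCoeff_eq_zero.mp (by rw [leadingCoeff, heq, coeff_C_mul]; exact h))

theorem coeff_mul_leadingCoeff_eq_zero_of_mul_eq_zero {f q : R[X]} (hfq : f * q = 0) {k : ℕ}
    (hk : ∀ j, k < j → C (f.coeff j) * q = 0) : f.coeff k * q.leadingCoeff = 0 := by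
  have h := congrArg (coeff · (k + q.natDegree)) hfq
  simp only [coeff_mul, coeff_zero] at h
  rwa [Finset.sum_eq_single (k, q.natDegree)] at h
  · rintro ⟨u, v⟩ huv hne
    simp only [Finset.HasAntidiagonal.mem_antidiagonal] at huv ⊢
    rcases lt_trichotomy u k with hlt | rfl | hgt
    · rw [coeff_eq_zero_of_natDegree_lt (p := q) (by omega), mul_zero]
    · exact absurd (by omega : v = q.natDegree) (by simpa using hne)
    · exact C_mul_eq_zero_iff.mp (hk u hgt) v
  · exact fun h => (h (Finset.HasAntidiagonal.mem_antidiagonal.mpr rfl)).elim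

theorem exists_C_coeff_mul_ne_zero_and_mul_leadingCoeff_eq_zero {f q : R[X]} (hfq : f * q = 0)
    (h : ∃ i, C (f.coeff i) * q ≠ 0) :
    ∃ k, C (f.coeff k) * q ≠ 0 ∧ f.coeff k * q.leadingCoeff = 0 := by
  classical
  obtain ⟨i, hi⟩ := h
  have hi_le : i ≤ f.natDegree := by
    by_contra! hlt
    exact hi (by rw [coeff_eq_zero_of_natDegree_lt hlt, C_0, zero_mul])
  refine ⟨Nat.findGreatest (fun j => C (f.coeff j) * q ≠ 0) f.natDegree,
    Nat.findGreatest_spec (P := fun j => C (f.coeff j) * q ≠ 0) hi_le hi,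
    coeff_mul_leadingCoeff_eq_zero_of_mul_eq_zero hfq fun j hj => ?_⟩
  by_cases hj_le : j ≤ f.natDegree
  · exact not_not.mp (Nat.findGreatest_is_greatest hj hj_le)
  · rw [coeff_eq_zero_of_natDegree_lt (not_le.mp hj_le), C_0, zero_mul]

theorem exists_ne_zero_mul_C_eq_zero_of_mul_eq_zero (hR : IsSemicommutativeRing R[X])
    {f q : R[X]} (hq : q ≠ 0) (hfq : f * q = 0) : ∃ c : R, c ≠ 0 ∧ f * C c = 0 := by
  induction hn : q.natDegree using Nat.strong_induction_on generalizing q with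
  | _ n ih =>
  by_cases hall : ∀ i, C (f.coeff i) * q = 0
  · refine ⟨q.leadingCoeff, leadingCoeff_ne_zero.mpr hq, ext fun i => ?_⟩
    rw [coeff_mul_C, coeff_zero]
    exact C_mul_eq_zero_iff.mp (hall i) _
  · push Not at hall
    obtain ⟨k, hk, hk_lead⟩ := exists_C_coeff_mul_ne_zero_and_mul_leadingCoeff_eq_zero hfq hall
    have hfkq : f * (C (f.coeff k) * q) = 0 := by rw [← mul_assoc]; exact hR f q hfq _
    exact ih _ (hn ▸ natDegree_C_mul_lt_of_mul_leadingCoeff_eq_zero hk hk_lead) hk hfkq rfl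

end Polynomial

/-- If the polynomial ring `R[x]` is reversible, then `R` is right McCoy. -/
theorem rightMcCoy_of_reversible_polynomial
    (R : Type*) [Ring R] (h : IsReversibleRing (Polynomial R)) :
    IsRightMcCoyRing R :=
  fun _ _ _ hg hfg => exists_ne_zero_mul_C_eq_zero_of_mul_eq_zero h.isSemicommutativeRing hg hfg
end

section
/- Let R be a commutative domain, σ a ring endomorphism of R, and M a torsion-free R-module. Then the Nagata extension R⊕_σM is an Armendariz ring. -/
/-- The Nagata extension `R ⊕_σ M` of a commutative ring `R` by an `R`-module `M` along a
ring endomorphism `σ` of `R`: the underlying additive group is `R × M`, with multiplication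
`(a, m) * (b, n) = (a * b, σ a • n + b • m)`. -/
@[nolint unusedArguments]
def Nagata (R : Type*) [CommRing R] (σ : R →+* R) (M : Type*)
    [AddCommGroup M] [Module R M] : Type _ := R × M

namespace Nagata

variable {R : Type*} [CommRing R] {σ : R →+* R} {M : Type*} [AddCommGroup M] [Module R M]

instance : AddCommGroup (Nagata R σ M) := inferInstanceAs (AddCommGroup (R × M))

/-- The element `(a, m)` of the Nagata extension. -/
def mk (a : R) (m : M) : Nagata R σ M := (a, m)

instance : Ring (Nagata R σ M) where
  __ := (inferInstance : AddCommGroup (Nagata R σ M))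
  mul x y := (x.1 * y.1, σ x.1 • y.2 + y.1 • x.2)
  one := ((1 : R), (0 : M))
  left_distrib x y z := by
    refine Prod.ext ?_ ?_
    · show x.1 * (y.1 + z.1) = x.1 * y.1 + x.1 * z.1; ring
    · show σ x.1 • (y.2 + z.2) + (y.1 + z.1) • x.2
          = (σ x.1 • y.2 + y.1 • x.2) + (σ x.1 • z.2 + z.1 • x.2)
      rw [smul_add, add_smul]; abel
  right_distrib x y z := by
    refine Prod.ext ?_ ?_
    · show (x.1 + y.1) * z.1 = x.1 * z.1 + y.1 * z.1; ring
    · show σ (x.1 + y.1) • z.2 + z.1 • (x.2 + y.2)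
          = (σ x.1 • z.2 + z.1 • x.2) + (σ y.1 • z.2 + z.1 • y.2)
      rw [map_add, add_smul, smul_add]; abel
  zero_mul x := by
    refine Prod.ext ?_ ?_
    · show (0 : R) * x.1 = 0; ring
    · show σ (0 : R) • x.2 + x.1 • (0 : M) = 0; simp
  mul_zero x := by
    refine Prod.ext ?_ ?_
    · show x.1 * (0 : R) = 0; ring
    · show σ x.1 • (0 : M) + (0 : R) • x.2 = 0; simp
  mul_assoc x y z := by
    refine Prod.ext ?_ ?_
    · show x.1 * y.1 * z.1 = x.1 * (y.1 * z.1); ring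
    · show σ (x.1 * y.1) • z.2 + z.1 • (σ x.1 • y.2 + y.1 • x.2)
          = σ x.1 • (σ y.1 • z.2 + z.1 • y.2) + (y.1 * z.1) • x.2
      rw [map_mul, mul_smul, smul_add, smul_add, mul_smul, smul_comm z.1 (σ x.1),
        smul_comm z.1 y.1]
      abel
  one_mul x := by
    refine Prod.ext ?_ ?_
    · show 1 * x.1 = x.1; ring
    · show σ 1 • x.2 + x.1 • (0 : M) = x.2; simp
  mul_one x := by
    refine Prod.ext ?_ ?_
    · show x.1 * 1 = x.1; ring
    · show σ x.1 • (0 : M) + (1 : R) • x.2 = x.2; simp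

end Nagata

/-- A ring `S` is Armendariz if whenever polynomials over it satisfy `f * g = 0`, all
products of their coefficients vanish. -/
def IsArmendarizRing (S : Type*) [Ring S] : Prop :=
  ∀ f g : Polynomial S, f * g = 0 → ∀ i j, f.coeff i * g.coeff j = 0

/-! Write `f = (A, F)` and `g = (B, G)` with `A, B ∈ R[X]` and `F, G` polynomials with
coefficients in `M`. Then `f * g = 0` says `A * B = 0` and `σ(A) • G + B • F = 0`. As `R[X]` is a
domain, `A = 0` or `B = 0`, which kills one of the two summands; the other vanishes only if one of
its factors does, because `M[X]` is a torsion-free `R[X]`-module (compare top coefficients).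
In each of the resulting cases every `(a_i, m_i) * (b_j, n_j)` vanishes. -/

open Polynomial

namespace PolynomialModule

variable {R M : Type*} [CommRing R] [AddCommGroup M] [Module R M]

theorem coeff_smul_natDegree_add (p : R[X]) (q : PolynomialModule R M) (e : ℕ)
    (he : ∀ j, e < j → q.coeff j = 0) :
    (p • q).coeff (p.natDegree + e) = p.leadingCoeff • q.coeff e := by
  rw [smul_apply, Finset.sum_eq_single_of_mem (p.natDegree, e) (by simp)]
  · rfl
  rintro ⟨i, j⟩ hij hne
  rw [Finset.HasAntidiagonal.mem_antidiagonal] at hij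
  rcases lt_or_ge p.natDegree i with hi | hi
  · rw [coeff_eq_zero_of_natDegree_lt hi, zero_smul]
  · rw [he j (by grind), smul_zero]

instance isTorsionFree [IsDomain R] [Module.IsTorsionFree R M] :
    Module.IsTorsionFree R[X] (PolynomialModule R M) := by
  refine .of_smul_eq_zero fun p q hpq => or_iff_not_imp_right.mpr fun hq => ?_
  have hsupp : q.coeff.support.Nonempty := by simpa using hq
  set e := q.coeff.support.max' hsupp
  have htop : (p • q).coeff (p.natDegree + e) = p.leadingCoeff • q.coeff e :=
    coeff_smul_natDegree_add p q e fun j hj => by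
      by_contra h
      exact (q.coeff.support.le_max' j (by simpa using h)).not_gt hj
  rw [hpq, coeff_zero, Finsupp.zero_apply, eq_comm, smul_eq_zero] at htop
  exact leadingCoeff_eq_zero.mp <| htop.resolve_right <| by
    simpa using q.coeff.support.max'_mem hsupp

end PolynomialModule

namespace Nagata

variable {R : Type*} [CommRing R] {σ : R →+* R} {M : Type*} [AddCommGroup M] [Module R M]

lemma ext_iff {x y : Nagata R σ M} : x = y ↔ x.1 = y.1 ∧ x.2 = y.2 := Prod.ext_iff

@[simp] lemma fst_zero : (0 : Nagata R σ M).1 = 0 := rfl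
@[simp] lemma snd_zero : (0 : Nagata R σ M).2 = 0 := rfl
@[simp] lemma fst_mul (x y : Nagata R σ M) : (x * y).1 = x.1 * y.1 := rfl
@[simp] lemma snd_mul (x y : Nagata R σ M) : (x * y).2 = σ x.1 • y.2 + y.1 • x.2 := rfl

lemma snd_sum {ι : Type*} (s : Finset ι) (x : ι → Nagata R σ M) :
    (∑ i ∈ s, x i).2 = ∑ i ∈ s, (x i).2 :=
  Prod.snd_sum ..

def fstHom : Nagata R σ M →+* R where
  toFun x := x.1
  map_one' := rfl
  map_mul' _ _ := rfl
  map_zero' := rfl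
  map_add' _ _ := rfl

@[simp] lemma fstHom_apply (x : Nagata R σ M) : fstHom x = x.1 := rfl

noncomputable def sndPoly : (Nagata R σ M)[X] →+ PolynomialModule R M where
  toFun f := .ofCoeff R (f.toFinsupp.coeff.mapRange Prod.snd rfl)
  map_zero' := rfl
  map_add' _ _ :=
    congrArg (PolynomialModule.ofCoeff R) (Finsupp.mapRange_add (fun _ _ => rfl) _ _)

@[simp] lemma coeff_sndPoly (f : (Nagata R σ M)[X]) (n : ℕ) :
    (sndPoly f).coeff n = (f.coeff n).2 := rfl

theorem sndPoly_mul (f g : (Nagata R σ M)[X]) :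
    sndPoly (f * g) = (f.map fstHom).map σ • sndPoly g + g.map fstHom • sndPoly f := by
  ext n
  simp only [coeff_sndPoly, coeff_mul, PolynomialModule.coeff_add, Finsupp.add_apply,
    PolynomialModule.smul_apply, coeff_map, fstHom_apply, snd_sum, snd_mul, Finset.sum_add_distrib]
  rw [← Finset.Nat.sum_antidiagonal_swap (f := fun ij => (g.coeff ij.1).1 • (f.coeff ij.2).2)]
  rfl

end Nagata

/-- If `R` is a commutative domain and `M` is a torsion-free `R`-module, then the Nagata
extension `R ⊕_σ M` is an Armendariz ring. -/
theorem nagata_armendariz_of_torsionFree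
    (R : Type*) [CommRing R] [IsDomain R] (σ : R →+* R)
    (M : Type*) [AddCommGroup M] [Module R M]
    (htf : ∀ (a : R) (m : M), a • m = 0 → a = 0 ∨ m = 0) :
    IsArmendarizRing (Nagata R σ M) := by
  have : Module.IsTorsionFree R M := .of_smul_eq_zero htf
  intro f g hfg i j
  have hfst : f.map Nagata.fstHom * g.map Nagata.fstHom = 0 := by
    rw [← Polynomial.map_mul, hfg, Polynomial.map_zero]
  have hsnd : (f.map Nagata.fstHom).map σ • Nagata.sndPoly g
      + g.map Nagata.fstHom • Nagata.sndPoly f = 0 := by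
    rw [← Nagata.sndPoly_mul, hfg, map_zero]
  simp only [Nagata.ext_iff, Nagata.fst_mul, Nagata.snd_mul, Nagata.fst_zero, Nagata.snd_zero]
  rcases mul_eq_zero.mp hfst with hA | hB
  · have hAi : (f.coeff i).1 = 0 := by simpa using congr(coeff $hA i)
    rw [hA, Polynomial.map_zero, zero_smul, zero_add, smul_eq_zero] at hsnd
    rcases hsnd with hB | hF
    · have hBj : (g.coeff j).1 = 0 := by simpa using congr(coeff $hB j)
      simp [hAi, hBj]
    · have hFi : (f.coeff i).2 = 0 := by simpa using congr(PolynomialModule.coeff $hF i)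
      simp [hAi, hFi]
  · have hBj : (g.coeff j).1 = 0 := by simpa using congr(coeff $hB j)
    rw [hB, zero_smul, add_zero, smul_eq_zero] at hsnd
    rcases hsnd with hA | hG
    · have hAi : σ (f.coeff i).1 = 0 := by simpa using congr(coeff $hA i)
      simp [hAi, hBj]
    · have hGj : (g.coeff j).2 = 0 := by simpa using congr(PolynomialModule.coeff $hG j)
      simp [hGj, hBj]
end
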